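/- The deformed sequence 0 → A[[λ]] →(P_⋆) A[[λ]] →(Δ_⋆) B[[λ]] →(P_⋆) B[[λ]] is an exact complex: (i) Δ_⋆(P_⋆(φ)) = 0 and P_⋆(Δ_⋆(φ)) = 0 for all φ ∈ A[[λ]]; (ii) P_⋆ is injective on A[[λ]]; (iii) for φ ∈ A[[λ]], Δ_⋆(φ) = 0 if and only if φ = P_⋆(χ) for some χ ∈ A[[λ]]; (iv) for u ∈ B[[λ]], P_⋆(u) = 0 if and only if u = Δ_⋆(ψ) for some ψ ∈ A[[λ]]. -/

import Mathlib

open Finset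

noncomputable section

namespace NCQFT

/-- The `ℝ[[λ]]`-linear map `V[[λ]] → W[[λ]]` induced by a family `F_(n)` of `ℝ`-linear maps,
`F_⋆ = Σ λⁿ F_(n)`, i.e. `(F_⋆ u)_(n) = Σ_{m+k=n} F_(m)(u_(k))`. -/
def starFun {V W : Type*} [AddCommGroup V] [Module ℝ V] [AddCommGroup W] [Module ℝ W]
    (F : ℕ → V →ₗ[ℝ] W) (u : ℕ → V) : ℕ → W :=
  fun n => ∑ p ∈ antidiagonal n, F p.1 (u p.2)

variable {B : Type*} [AddCommGroup B] [Module ℝ B]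

/-- `chain D Pn [j₁, …, j_k] = D ∘ P_(j₁) ∘ D ∘ P_(j₂) ∘ ⋯ ∘ D ∘ P_(j_k) ∘ D`. -/
def chain (D : B →ₗ[ℝ] B) (Pn : ℕ → B →ₗ[ℝ] B) : List ℕ → (B →ₗ[ℝ] B)
  | [] => D
  | j :: t => D ∘ₗ Pn j ∘ₗ chain D Pn t

/-- The `n`-th coefficient `Δ_(n)±` of the deformed Green's operator:
`Δ_(n)± = Σ_{k=1}^{n} Σ_{j₁+⋯+j_k = n, jᵢ ≥ 1} (−1)^k Δ_± ∘ P_(j₁) ∘ Δ_± ∘ P_(j₂) ∘ ⋯ ∘ Δ_± ∘ P_(j_k) ∘ Δ_±`,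
realized as a sum over all compositions `(j₁, …, j_k)` of `n` (for `n = 0` it equals `Δ_±`). -/
def dGreen (D : B →ₗ[ℝ] B) (Pn : ℕ → B →ₗ[ℝ] B) (n : ℕ) : B →ₗ[ℝ] B :=
  ∑ c : Composition n, ((-1 : ℝ) ^ c.blocks.length) • chain D Pn c.blocks

end NCQFT


namespace NCQFT
variable {B : Type*} [AddCommGroup B] [Module ℝ B]

/-- The finset of lists of positive naturals with sum `n`. -/
def compSet (n : ℕ) : Finset (List ℕ) :=
  (Finset.univ : Finset (Composition n)).image Composition.blocks

lemma mem_compSet {n : ℕ} {l : List ℕ} :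
    l ∈ compSet n ↔ (∀ j ∈ l, 0 < j) ∧ l.sum = n := by
  constructor
  · rintro h
    simp only [compSet, mem_image] at h
    obtain ⟨c, -, rfl⟩ := h
    exact ⟨fun j hj => c.blocks_pos hj, c.blocks_sum⟩
  · rintro ⟨h1, h2⟩
    simp only [compSet, mem_image]
    exact ⟨⟨l, fun hj => h1 _ hj, h2⟩, mem_univ _, rfl⟩

variable {M : Type*} [AddCommMonoid M]

lemma sum_compSet (n : ℕ) (f : List ℕ → M) :
    ∑ c : Composition n, f c.blocks = ∑ l ∈ compSet n, f l := by
  rw [compSet, Finset.sum_image]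
  intro c _ c' _ h
  exact Composition.ext h

lemma compSet_zero : compSet 0 = {[]} := by
  ext l
  simp only [mem_compSet, mem_singleton]
  constructor
  · rintro ⟨h1, h2⟩
    cases l with
    | nil => rfl
    | cons j t =>
      exfalso
      have := h1 j (by simp)
      simp only [List.sum_cons] at h2
      omega
  · rintro rfl; simp

lemma peel (n : ℕ) (f : List ℕ → M) :
    ∑ l ∈ compSet (n+1), f l
      = ∑ i ∈ range (n+1), ∑ l ∈ compSet i, f ((n+1-i) :: l) := by
  rw [show (∑ i ∈ range (n+1), ∑ l ∈ compSet i, f ((n+1-i) :: l))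
      = ∑ x ∈ (range (n+1)).sigma (fun i => compSet i), f ((n+1-x.fst) :: x.snd) from
    Finset.sum_sigma' (range (n+1)) (fun i => compSet i) (fun i l => f ((n+1-i) :: l))]
  refine (Finset.sum_nbij' (fun p => (n+1-p.1) :: p.2)
    (fun l => (⟨l.tail.sum, l.tail⟩ : Σ _ : ℕ, List ℕ)) ?_ ?_ ?_ ?_ ?_).symm
  · rintro ⟨i, l⟩ hp
    simp only [mem_sigma, mem_range, mem_compSet] at hp
    rw [mem_compSet]
    obtain ⟨hi, h1, h2⟩ := hp
    dsimp only
    constructor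
    · intro j hj
      rcases List.mem_cons.1 hj with rfl | hj
      · omega
      · exact h1 j hj
    · simp only [List.sum_cons]; omega
  · intro l hl
    rw [mem_compSet] at hl
    obtain ⟨h1, h2⟩ := hl
    have hne : l ≠ [] := by rintro rfl; simp at h2
    obtain ⟨a, t, rfl⟩ := List.exists_cons_of_ne_nil hne
    simp only [List.tail_cons, mem_sigma, mem_range, mem_compSet]
    have ha : 0 < a := h1 a (by simp)
    simp only [List.sum_cons] at h2
    exact ⟨by omega, fun j hj => h1 j (by simp [hj]), trivial⟩
  · rintro ⟨i, l⟩ hp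
    simp only [mem_sigma, mem_range, mem_compSet] at hp
    obtain ⟨hi, h1, h2⟩ := hp
    dsimp only [List.tail_cons]
    congr 1 <;> simp [h2]
  · intro l hl
    rw [mem_compSet] at hl
    obtain ⟨h1, h2⟩ := hl
    have hne : l ≠ [] := by rintro rfl; simp at h2
    obtain ⟨a, t, rfl⟩ := List.exists_cons_of_ne_nil hne
    have ha : 0 < a := h1 a (by simp)
    simp only [List.sum_cons] at h2
    simp only [List.tail_cons, List.cons.injEq]
    exact ⟨by omega, trivial⟩
  · rintro ⟨i, l⟩ _; rfl

lemma sum_compSet_reverse (n : ℕ) (f : List ℕ → M) :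
    ∑ l ∈ compSet n, f l = ∑ l ∈ compSet n, f l.reverse := by
  refine Finset.sum_nbij' (fun l => l.reverse) (fun l => l.reverse) ?_ ?_ ?_ ?_ ?_ <;>
    intro l hl <;>
    simp_all [mem_compSet, List.sum_reverse]

variable (D : B →ₗ[ℝ] B) (Pn : ℕ → B →ₗ[ℝ] B)

lemma chain_snoc (t : List ℕ) (j : ℕ) :
    chain D Pn (t ++ [j]) = chain D Pn t ∘ₗ Pn j ∘ₗ D := by
  induction t with
  | nil => rfl
  | cons a t ih => simp [chain, ih, LinearMap.comp_assoc]

lemma dGreen_zero : dGreen D Pn 0 = D := by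
  rw [dGreen, sum_compSet 0 (fun l => ((-1 : ℝ) ^ l.length) • chain D Pn l), compSet_zero]
  simp [chain]

lemma dGreen_apply_eq (n : ℕ) (x : B) :
    dGreen D Pn n x = ∑ l ∈ compSet n, ((-1 : ℝ) ^ l.length) • chain D Pn l x := by
  rw [dGreen, sum_compSet n (fun l => ((-1 : ℝ) ^ l.length) • chain D Pn l), LinearMap.sum_apply]
  simp

lemma dGreen_succ_apply (n : ℕ) (x : B) :
    dGreen D Pn (n+1) x = - ∑ i ∈ range (n+1), D (Pn (n+1-i) (dGreen D Pn i x)) := by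
  rw [dGreen_apply_eq, peel n (fun l => ((-1 : ℝ) ^ l.length) • chain D Pn l x)]
  rw [← Finset.sum_neg_distrib]
  refine Finset.sum_congr rfl fun i _ => ?_
  rw [dGreen_apply_eq, map_sum, map_sum, ← Finset.sum_neg_distrib]
  refine Finset.sum_congr rfl fun l _ => ?_
  simp [chain, pow_succ, map_smul, mul_comm, mul_smul]

lemma dGreen_succ'_apply (n : ℕ) (x : B) :
    dGreen D Pn (n+1) x = - ∑ i ∈ range (n+1), dGreen D Pn i (Pn (n+1-i) (D x)) := by
  rw [dGreen_apply_eq, sum_compSet_reverse (n+1) (fun l => ((-1 : ℝ) ^ l.length) • chain D Pn l x)]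
  have hlen : ∀ l : List ℕ, ((-1 : ℝ) ^ l.reverse.length) = ((-1 : ℝ) ^ l.length) := by
    intro l; rw [List.length_reverse]
  rw [peel n (fun l => ((-1 : ℝ) ^ l.reverse.length) • chain D Pn l.reverse x)]
  rw [← Finset.sum_neg_distrib]
  refine Finset.sum_congr rfl fun i _ => ?_
  rw [dGreen_apply_eq,
    sum_compSet_reverse i (fun l => ((-1 : ℝ) ^ l.length) • chain D Pn l (Pn (n+1-i) (D x)))]
  rw [← Finset.sum_neg_distrib]
  refine Finset.sum_congr rfl fun l _ => ?_
  rw [List.reverse_cons, chain_snoc]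
  simp only [List.length_append, List.length_reverse, List.length_cons, List.length_nil,
    LinearMap.comp_apply]
  rw [pow_succ, mul_comm, neg_one_mul, neg_smul]

end NCQFT

section Part2
namespace NCQFT
open Finset

variable {B : Type*} [AddCommGroup B] [Module ℝ B]
variable {M : Type*} [AddCommMonoid M]

/-- generic reshuffling of a triple convolution sum -/
lemma triple_sum (n : ℕ) (h : ℕ → ℕ → ℕ → M) :
    ∑ p ∈ antidiagonal n, ∑ q ∈ antidiagonal p.2, h p.1 q.1 q.2
      = ∑ p ∈ antidiagonal n, ∑ q ∈ antidiagonal p.1, h q.1 q.2 p.2 := by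
  rw [show (∑ p ∈ antidiagonal n, ∑ q ∈ antidiagonal p.2, h p.1 q.1 q.2)
      = ∑ x ∈ (antidiagonal n).sigma (fun p => antidiagonal p.2), h x.fst.1 x.snd.1 x.snd.2 from
    Finset.sum_sigma' _ _ _]
  rw [show (∑ p ∈ antidiagonal n, ∑ q ∈ antidiagonal p.1, h q.1 q.2 p.2)
      = ∑ x ∈ (antidiagonal n).sigma (fun p => antidiagonal p.1), h x.snd.1 x.snd.2 x.fst.2 from
    Finset.sum_sigma' _ _ _]
  refine Finset.sum_nbij' (fun x => ⟨(x.fst.1 + x.snd.1, x.snd.2), (x.fst.1, x.snd.1)⟩)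
    (fun x => ⟨(x.snd.1, x.snd.2 + x.fst.2), (x.snd.2, x.fst.2)⟩) ?_ ?_ ?_ ?_ ?_
  · rintro ⟨⟨a, b⟩, ⟨c, d⟩⟩ hx
    simp only [mem_sigma, Finset.HasAntidiagonal.mem_antidiagonal] at hx
    dsimp only
    simp only [mem_sigma, Finset.HasAntidiagonal.mem_antidiagonal, and_true, true_and]
    omega
  · rintro ⟨⟨a, b⟩, ⟨c, d⟩⟩ hx
    simp only [mem_sigma, Finset.HasAntidiagonal.mem_antidiagonal] at hx
    dsimp only
    simp only [mem_sigma, Finset.HasAntidiagonal.mem_antidiagonal, and_true, true_and]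
    omega
  · rintro ⟨⟨a, b⟩, ⟨c, d⟩⟩ hx
    simp only [mem_sigma, Finset.HasAntidiagonal.mem_antidiagonal] at hx
    dsimp only
    simp only [Sigma.mk.inj_iff, Prod.mk.injEq, heq_eq_eq, and_true, true_and]
    omega
  · rintro ⟨⟨a, b⟩, ⟨c, d⟩⟩ hx
    simp only [mem_sigma, Finset.HasAntidiagonal.mem_antidiagonal] at hx
    dsimp only
    simp only [Sigma.mk.inj_iff, Prod.mk.injEq, heq_eq_eq, and_true, true_and]
    omega
  · rintro ⟨⟨a, b⟩, ⟨c, d⟩⟩ _; rfl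

variable (A : Submodule ℝ B) (Pn : ℕ → B →ₗ[ℝ] B) (D : B →ₗ[ℝ] B)

/-- `P_⋆ ∘ Δ_⋆± = 1` pointwise on `A`, coefficientwise. -/
lemma sumPG (hPpos : ∀ n, 0 < n → ∀ u : B, Pn n u ∈ A)
    (hPD : ∀ a ∈ A, Pn 0 (D a) = a) :
    ∀ (m : ℕ) (x : B), x ∈ A →
      ∑ p ∈ antidiagonal m, Pn p.1 (dGreen D Pn p.2 x) = if m = 0 then x else 0 := by
  intro m x hx
  rw [Finset.Nat.sum_antidiagonal_eq_sum_range_succ_mk]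
  cases m with
  | zero => simp [dGreen_zero, hPD x hx]
  | succ n =>
    rw [Finset.sum_range_succ']
    have e0 : Pn 0 (dGreen D Pn (n + 1 - 0) x)
        = - ∑ i ∈ range (n+1), Pn (n+1-i) (dGreen D Pn i x) := by
      rw [show n + 1 - 0 = n + 1 from rfl, dGreen_succ_apply, map_neg, map_sum]
      congr 1
      refine Finset.sum_congr rfl fun i hi => ?_
      exact hPD _ (hPpos (n+1-i) (by simp at hi; omega) _)
    rw [e0]
    have key : ∀ F : ℕ → ℕ → B, ∑ i ∈ range (n+1), F (i+1) (n + 1 - (i+1))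
        = ∑ i ∈ range (n+1), F (n+1-i) i := by
      intro F
      rw [← Finset.sum_range_reflect]
      refine Finset.sum_congr rfl fun i hi => ?_
      simp only [mem_range] at hi
      congr 1 <;> omega
    rw [key (fun a b => Pn a (dGreen D Pn b x))]
    simp

/-- `Δ_⋆± ∘ P_⋆ = 1` pointwise on `A`, coefficientwise. -/
lemma sumGP (hDP : ∀ a ∈ A, D (Pn 0 a) = a) :
    ∀ (m : ℕ) (x : B), x ∈ A →
      ∑ p ∈ antidiagonal m, dGreen D Pn p.1 (Pn p.2 x) = if m = 0 then x else 0 := by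
  intro m x hx
  rw [Finset.Nat.sum_antidiagonal_eq_sum_range_succ_mk]
  cases m with
  | zero => simp [dGreen_zero, hDP x hx]
  | succ n =>
    rw [Finset.sum_range_succ]
    have e0 : dGreen D Pn (n+1) (Pn (n + 1 - (n+1)) x)
        = - ∑ i ∈ range (n+1), dGreen D Pn i (Pn (n+1-i) x) := by
      rw [show n + 1 - (n+1) = 0 by omega, dGreen_succ'_apply]
      congr 1
      refine Finset.sum_congr rfl fun i hi => ?_
      rw [hDP x hx]
    rw [e0]
    simp

lemma starFun_inv₁ (hPpos : ∀ n, 0 < n → ∀ u : B, Pn n u ∈ A)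
    (hPD : ∀ a ∈ A, Pn 0 (D a) = a) :
    ∀ u : ℕ → B, (∀ n, u n ∈ A) → starFun Pn (starFun (dGreen D Pn) u) = u := by
  intro u hu
  funext n
  show ∑ p ∈ antidiagonal n, Pn p.1 (∑ q ∈ antidiagonal p.2, dGreen D Pn q.1 (u q.2)) = u n
  have : ∀ p : ℕ × ℕ, Pn p.1 (∑ q ∈ antidiagonal p.2, dGreen D Pn q.1 (u q.2))
      = ∑ q ∈ antidiagonal p.2, Pn p.1 (dGreen D Pn q.1 (u q.2)) := fun p => map_sum _ _ _
  simp only [this]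
  rw [triple_sum n (fun a c d => Pn a (dGreen D Pn c (u d)))]
  have : ∀ p ∈ antidiagonal n,
      (∑ q ∈ antidiagonal p.1, Pn q.1 (dGreen D Pn q.2 (u p.2)))
        = if p.1 = 0 then u p.2 else 0 := fun p _ => sumPG A Pn D hPpos hPD p.1 (u p.2) (hu p.2)
  rw [Finset.sum_congr rfl this, Finset.Nat.sum_antidiagonal_eq_sum_range_succ_mk]
  rw [show (∑ k ∈ range (n+1), if (k, n - k).1 = 0 then u (k, n - k).2 else 0)
      = ∑ k ∈ range (n+1), if k = 0 then u (n - k) else 0 from rfl,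
    Finset.sum_ite_eq' (range (n+1)) 0 (fun k => u (n - k))]
  simp

lemma starFun_inv₂ (hDP : ∀ a ∈ A, D (Pn 0 a) = a) :
    ∀ u : ℕ → B, (∀ n, u n ∈ A) → starFun (dGreen D Pn) (starFun Pn u) = u := by
  intro u hu
  funext n
  show ∑ p ∈ antidiagonal n, dGreen D Pn p.1 (∑ q ∈ antidiagonal p.2, Pn q.1 (u q.2)) = u n
  have : ∀ p : ℕ × ℕ, dGreen D Pn p.1 (∑ q ∈ antidiagonal p.2, Pn q.1 (u q.2))
      = ∑ q ∈ antidiagonal p.2, dGreen D Pn p.1 (Pn q.1 (u q.2)) := fun p => map_sum _ _ _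
  simp only [this]
  rw [triple_sum n (fun a c d => dGreen D Pn a (Pn c (u d)))]
  have : ∀ p ∈ antidiagonal n,
      (∑ q ∈ antidiagonal p.1, dGreen D Pn q.1 (Pn q.2 (u p.2)))
        = if p.1 = 0 then u p.2 else 0 := fun p _ => sumGP A Pn D hDP p.1 (u p.2) (hu p.2)
  rw [Finset.sum_congr rfl this, Finset.Nat.sum_antidiagonal_eq_sum_range_succ_mk]
  rw [show (∑ k ∈ range (n+1), if (k, n - k).1 = 0 then u (k, n - k).2 else 0)
      = ∑ k ∈ range (n+1), if k = 0 then u (n - k) else 0 from rfl,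
    Finset.sum_ite_eq' (range (n+1)) 0 (fun k => u (n - k))]
  simp

end NCQFT
end Part2

section Part3
namespace NCQFT
open Finset

variable {B : Type*} [AddCommGroup B] [Module ℝ B]

lemma starFun_sub (Pn : ℕ → B →ₗ[ℝ] B) (u v : ℕ → B) :
    starFun Pn (u - v) = starFun Pn u - starFun Pn v := by
  funext n
  simp [starFun, Finset.sum_sub_distrib]

/-- coefficient recursion for `Δ_⋆± φ`. -/
lemma coeffG (Pn : ℕ → B →ₗ[ℝ] B) (D : B →ₗ[ℝ] B) (φ : ℕ → B) (n : ℕ) :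
    starFun (dGreen D Pn) φ n
      = D (φ n - ∑ i ∈ range n, Pn (n - i) (starFun (dGreen D Pn) φ i)) := by
  have expand : ∀ m, starFun (dGreen D Pn) φ m
      = ∑ k ∈ range (m+1), dGreen D Pn k (φ (m - k)) := by
    intro m
    rw [starFun, Finset.Nat.sum_antidiagonal_eq_sum_range_succ_mk]
  cases n with
  | zero => simp [expand, dGreen_zero]
  | succ m =>
    rw [expand, Finset.sum_range_succ']
    have e1 : ∀ i ∈ range (m+1), dGreen D Pn (i+1) (φ (m + 1 - (i+1)))
        = - ∑ k ∈ range (i+1), D (Pn (i+1-k) (dGreen D Pn k (φ (m - i)))) := by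
      intro i hi
      rw [show m + 1 - (i + 1) = m - i by omega, dGreen_succ_apply]
    rw [Finset.sum_congr rfl e1, Finset.sum_neg_distrib]
    have e2 : ∑ i ∈ range (m+1), ∑ k ∈ range (i+1), D (Pn (i+1-k) (dGreen D Pn k (φ (m - i))))
        = ∑ j ∈ range (m+1), ∑ k ∈ range (j+1), D (Pn (m+1-j) (dGreen D Pn k (φ (j - k)))) := by
      rw [show (∑ i ∈ range (m+1), ∑ k ∈ range (i+1),
            D (Pn (i+1-k) (dGreen D Pn k (φ (m - i)))))
          = ∑ x ∈ (range (m+1)).sigma (fun i => range (i+1)),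
            D (Pn (x.fst+1-x.snd) (dGreen D Pn x.snd (φ (m - x.fst)))) from
        Finset.sum_sigma' _ _ _]
      rw [show (∑ j ∈ range (m+1), ∑ k ∈ range (j+1),
            D (Pn (m+1-j) (dGreen D Pn k (φ (j - k)))))
          = ∑ x ∈ (range (m+1)).sigma (fun j => range (j+1)),
            D (Pn (m+1-x.fst) (dGreen D Pn x.snd (φ (x.fst - x.snd)))) from
        Finset.sum_sigma' _ _ _]
      refine Finset.sum_nbij' (fun x => ⟨m - x.fst + x.snd, x.snd⟩)
        (fun x => ⟨m - x.fst + x.snd, x.snd⟩) ?_ ?_ ?_ ?_ ?_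
      · rintro ⟨i, k⟩ hx
        simp only [mem_sigma, mem_range] at hx ⊢
        omega
      · rintro ⟨j, k⟩ hx
        simp only [mem_sigma, mem_range] at hx ⊢
        omega
      · rintro ⟨i, k⟩ hx
        simp only [mem_sigma, mem_range] at hx
        dsimp only
        simp only [Sigma.mk.inj_iff, heq_eq_eq, and_true, true_and]
        omega
      · rintro ⟨j, k⟩ hx
        simp only [mem_sigma, mem_range] at hx
        dsimp only
        simp only [Sigma.mk.inj_iff, heq_eq_eq, and_true, true_and]
        omega
      · rintro ⟨i, k⟩ hx
        simp only [mem_sigma, mem_range] at hx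
        dsimp only
        rw [show m + 1 - (m - i + k) = i + 1 - k by omega, show m - i + k - k = m - i by omega]
    rw [e2]
    have e3 : ∀ j ∈ range (m+1), ∑ k ∈ range (j+1), D (Pn (m+1-j) (dGreen D Pn k (φ (j - k))))
        = D (Pn (m+1-j) (starFun (dGreen D Pn) φ j)) := by
      intro j hj
      rw [expand j, map_sum, map_sum]
    rw [Finset.sum_congr rfl e3, map_sub, map_sum]
    have h0 : dGreen D Pn 0 (φ (m + 1 - 0)) = D (φ (m+1)) := by
      rw [dGreen_zero, Nat.sub_zero]
    rw [h0]
    abel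
end NCQFT
end Part3

section Part4
namespace NCQFT
open Finset
open scoped Classical

variable {B : Type*} [AddCommGroup B] [Module ℝ B]

private lemma aux_snd_lt {n : ℕ} (p : ℕ × ℕ) (hp : p ∈ (antidiagonal n).erase (0, n)) :
    p.2 < n := by
  rw [Finset.mem_erase, Finset.HasAntidiagonal.mem_antidiagonal] at hp
  obtain ⟨hne, hsum⟩ := hp
  rcases Nat.eq_zero_or_pos p.1 with h0 | h1
  · exfalso; apply hne; rw [Prod.ext_iff]; omega
  · omega

noncomputable def psiAux (A : Submodule ℝ B) (Pn : ℕ → B →ₗ[ℝ] B) (Dp Dm : B →ₗ[ℝ] B)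
    (u : ℕ → B) : ℕ → B
  | n =>
    if h : ∃ a ∈ A, (u n - ∑ p ∈ ((antidiagonal n).erase (0, n)).attach,
        (dGreen Dp Pn (p : ℕ × ℕ).1 (psiAux A Pn Dp Dm u (p : ℕ × ℕ).2)
          - dGreen Dm Pn (p : ℕ × ℕ).1 (psiAux A Pn Dp Dm u (p : ℕ × ℕ).2))) = Dp a - Dm a
    then h.choose else 0
  decreasing_by all_goals exact aux_snd_lt _ p.2

lemma psiAux_eq (A : Submodule ℝ B) (Pn : ℕ → B →ₗ[ℝ] B) (Dp Dm : B →ₗ[ℝ] B) (u : ℕ → B) (n : ℕ) :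
    psiAux A Pn Dp Dm u n
      = if h : ∃ a ∈ A, (u n - ∑ p ∈ ((antidiagonal n).erase (0, n)).attach,
            (dGreen Dp Pn (p : ℕ × ℕ).1 (psiAux A Pn Dp Dm u (p : ℕ × ℕ).2)
              - dGreen Dm Pn (p : ℕ × ℕ).1 (psiAux A Pn Dp Dm u (p : ℕ × ℕ).2))) = Dp a - Dm a
        then h.choose else 0 := by
  rw [psiAux]

end NCQFT
end Part4

section Part5
namespace NCQFT
open Finset
open scoped Classical

variable {B : Type*} [AddCommGroup B] [Module ℝ B]

lemma psi_spec (A : Submodule ℝ B) (Pn : ℕ → B →ₗ[ℝ] B) (Dp Dm : B →ₗ[ℝ] B)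
    (hPpos : ∀ n, 0 < n → ∀ u : B, Pn n u ∈ A)
    (hPDp : ∀ a ∈ A, Pn 0 (Dp a) = a) (hPDm : ∀ a ∈ A, Pn 0 (Dm a) = a)
    (hex₂ : ∀ u : B, Pn 0 u = 0 → ∃ a ∈ A, u = Dp a - Dm a)
    (u : ℕ → B) (hu : starFun Pn u = 0) :
    ∀ n, psiAux A Pn Dp Dm u n ∈ A ∧
      u n = starFun (dGreen Dp Pn) (psiAux A Pn Dp Dm u) n
            - starFun (dGreen Dm Pn) (psiAux A Pn Dp Dm u) n := by
  have cb : ∀ φ : ℕ → B, (∀ k, φ k ∈ A) →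
      starFun Pn (starFun (dGreen Dp Pn) φ - starFun (dGreen Dm Pn) φ) = 0 := by
    intro φ hφ
    rw [starFun_sub, starFun_inv₁ A Pn Dp hPpos hPDp φ hφ,
      starFun_inv₁ A Pn Dm hPpos hPDm φ hφ, sub_self]
  intro n
  induction n using Nat.strong_induction_on with
  | _ n ih =>
  set ψ := psiAux A Pn Dp Dm u with hψ
  set ψt : ℕ → B := fun k => if k < n then ψ k else 0 with hψt
  have hψtA : ∀ k, ψt k ∈ A := by
    intro k
    by_cases h : k < n
    · simpa [hψt, h] using (ih k h).1
    · simp [hψt, h]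
  have htrunc : ∀ F : ℕ → B →ₗ[ℝ] B, ∀ k < n, starFun F ψt k = starFun F ψ k := by
    intro F k hk
    refine Finset.sum_congr rfl fun p hp => ?_
    rw [Finset.HasAntidiagonal.mem_antidiagonal] at hp
    have h2 : p.2 < n := by omega
    simp only [hψt, if_pos h2]
  set r : ℕ → B := u - (starFun (dGreen Dp Pn) ψt - starFun (dGreen Dm Pn) ψt) with hrdef
  have hr0 : ∀ k < n, r k = 0 := by
    intro k hk
    have : r k = u k - (starFun (dGreen Dp Pn) ψt k - starFun (dGreen Dm Pn) ψt k) := rfl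
    rw [this, htrunc _ k hk, htrunc _ k hk, ← (ih k hk).2, sub_self]
  have hPr : starFun Pn r = 0 := by
    rw [hrdef, starFun_sub, hu, cb ψt hψtA, sub_zero]
  have hmem0n : ((0 : ℕ), n) ∈ antidiagonal n := by simp
  have hPn0 : Pn 0 (r n) = 0 := by
    have h1 : ∑ p ∈ antidiagonal n, Pn p.1 (r p.2) = 0 := by
      have := congrFun hPr n
      simpa [starFun] using this
    have h3 : ∑ p ∈ (antidiagonal n).erase (0, n), Pn p.1 (r p.2) = 0 :=
      Finset.sum_eq_zero fun p hp => by rw [hr0 p.2 (aux_snd_lt p hp), map_zero]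
    have h4 := Finset.add_sum_erase (antidiagonal n) (fun p => Pn p.1 (r p.2)) hmem0n
    dsimp only at h4
    rw [h3, add_zero] at h4
    exact h4.trans h1
  set S : B := ∑ p ∈ (antidiagonal n).erase (0, n),
      (dGreen Dp Pn p.1 (ψ p.2) - dGreen Dm Pn p.1 (ψ p.2)) with hS
  have hrnS : r n = u n - S := by
    have e0 : starFun (dGreen Dp Pn) ψt n - starFun (dGreen Dm Pn) ψt n
        = ∑ p ∈ antidiagonal n,
            (dGreen Dp Pn p.1 (ψt p.2) - dGreen Dm Pn p.1 (ψt p.2)) := by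
      rw [starFun, starFun, ← Finset.sum_sub_distrib]
    have e1 : ∑ p ∈ antidiagonal n,
          (dGreen Dp Pn p.1 (ψt p.2) - dGreen Dm Pn p.1 (ψt p.2)) = S := by
      rw [← Finset.add_sum_erase (antidiagonal n) _ hmem0n]
      have hz : ψt n = 0 := by simp [hψt]
      have ht : ∀ p ∈ (antidiagonal n).erase (0, n), ψt p.2 = ψ p.2 := by
        intro p hp
        simp only [hψt, if_pos (aux_snd_lt p hp)]
      rw [hS]
      rw [Finset.sum_congr rfl fun p hp => by rw [ht p hp]]
      simp [hz]
    show u n - (starFun (dGreen Dp Pn) ψt n - starFun (dGreen Dm Pn) ψt n) = u n - S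
    rw [e0, e1]
  have hcond : ∃ a ∈ A, (u n - ∑ p ∈ ((antidiagonal n).erase (0, n)).attach,
      (dGreen Dp Pn (p : ℕ × ℕ).1 (psiAux A Pn Dp Dm u (p : ℕ × ℕ).2)
        - dGreen Dm Pn (p : ℕ × ℕ).1 (psiAux A Pn Dp Dm u (p : ℕ × ℕ).2))) = Dp a - Dm a := by
    rw [Finset.sum_attach ((antidiagonal n).erase (0, n))
      (fun p => dGreen Dp Pn p.1 (psiAux A Pn Dp Dm u p.2)
        - dGreen Dm Pn p.1 (psiAux A Pn Dp Dm u p.2)), ← hψ, ← hS]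
    refine hex₂ (u n - S) ?_
    rw [← hrnS]
    exact hPn0
  have hun : psiAux A Pn Dp Dm u n = hcond.choose := by
    rw [psiAux_eq]
    exact dif_pos hcond
  obtain ⟨hcA, hceq⟩ := hcond.choose_spec
  have hun' : ψ n = hcond.choose := by rw [hψ]; exact hun
  have hsa : S = ∑ p ∈ ((antidiagonal n).erase (0, n)).attach,
      (dGreen Dp Pn (p : ℕ × ℕ).1 (psiAux A Pn Dp Dm u (p : ℕ × ℕ).2)
        - dGreen Dm Pn (p : ℕ × ℕ).1 (psiAux A Pn Dp Dm u (p : ℕ × ℕ).2)) := by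
    rw [hS, hψ]
    exact (Finset.sum_attach _ _).symm
  have hkey : u n - S = Dp (ψ n) - Dm (ψ n) := by
    rw [hsa, hun']
    exact hceq
  constructor
  · rw [hun']; exact hcA
  · have e2 : starFun (dGreen Dp Pn) ψ n - starFun (dGreen Dm Pn) ψ n
        = (dGreen Dp Pn 0 (ψ n) - dGreen Dm Pn 0 (ψ n)) + S := by
      rw [starFun, starFun, ← Finset.sum_sub_distrib,
        ← Finset.add_sum_erase (antidiagonal n) _ hmem0n, hS]
    rw [e2, dGreen_zero, dGreen_zero, ← hkey]
    abel
end NCQFT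
end Part5



namespace NCQFT

/-- the deformed sequence
`0 → A[[λ]] →(P_⋆) A[[λ]] →(Δ_⋆) B[[λ]] →(P_⋆) B[[λ]]` is an exact complex, where
`Δ_⋆ = Δ_⋆₊ − Δ_⋆₋` is the deformed retarded-advanced Green's operator. -/
theorem statement_1
    {B : Type*} [AddCommGroup B] [Module ℝ B] (A : Submodule ℝ B)
    -- the family `P_(n)` (`P := P_(0)`), with `P(A) ⊆ A` and `P_(n) : B → A` for `n ≥ 1`
    (Pn : ℕ → B →ₗ[ℝ] B)
    (hPA : ∀ a ∈ A, Pn 0 a ∈ A)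
    (hPpos : ∀ n, 0 < n → ∀ u : B, Pn n u ∈ A)
    -- the undeformed retarded/advanced Green's operators `Δ_±` (defined on `A`)
    (Dp Dm : B →ₗ[ℝ] B)
    (hPDp : ∀ a ∈ A, Pn 0 (Dp a) = a) (hDpP : ∀ a ∈ A, Dp (Pn 0 a) = a)
    (hPDm : ∀ a ∈ A, Pn 0 (Dm a) = a) (hDmP : ∀ a ∈ A, Dm (Pn 0 a) = a)
    -- undeformed exactness: `ker Δ ∩ A = P(A)` and `ker P = Δ(A)`, where `Δ = Δ_+ − Δ_−`
    (hex₁ : ∀ a ∈ A, Dp a - Dm a = 0 → ∃ b ∈ A, a = Pn 0 b)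
    (hex₂ : ∀ u : B, Pn 0 u = 0 → ∃ a ∈ A, u = Dp a - Dm a)
 :
    -- (i) the sequence is a complex: `Δ_⋆ ∘ P_⋆ = 0` and `P_⋆ ∘ Δ_⋆ = 0` on `A[[λ]]`
    (∀ φ : ℕ → B, (∀ n, φ n ∈ A) →
      starFun (dGreen Dp Pn) (starFun Pn φ) - starFun (dGreen Dm Pn) (starFun Pn φ) = 0 ∧
      starFun Pn (starFun (dGreen Dp Pn) φ - starFun (dGreen Dm Pn) φ) = 0) ∧
    -- (ii) `P_⋆` is injective on `A[[λ]]`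
    Set.InjOn (starFun Pn) {φ : ℕ → B | ∀ n, φ n ∈ A} ∧
    -- (iii) exactness at the second `A[[λ]]`: `Δ_⋆(φ) = 0` iff `φ ∈ P_⋆[A[[λ]]]`
    (∀ φ : ℕ → B, (∀ n, φ n ∈ A) →
      (starFun (dGreen Dp Pn) φ - starFun (dGreen Dm Pn) φ = 0 ↔
        ∃ χ : ℕ → B, (∀ n, χ n ∈ A) ∧ φ = starFun Pn χ)) ∧
    -- (iv) exactness at the first `B[[λ]]`: `P_⋆(u) = 0` iff `u ∈ Δ_⋆[A[[λ]]]`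
    (∀ u : ℕ → B,
      (starFun Pn u = 0 ↔
        ∃ ψ : ℕ → B, (∀ n, ψ n ∈ A) ∧
          u = starFun (dGreen Dp Pn) ψ - starFun (dGreen Dm Pn) ψ)) := by

  have i1p := starFun_inv₁ A Pn Dp hPpos hPDp
  have i1m := starFun_inv₁ A Pn Dm hPpos hPDm
  have i2p := starFun_inv₂ A Pn Dp hDpP
  have i2m := starFun_inv₂ A Pn Dm hDmP
  have cb : ∀ φ : ℕ → B, (∀ k, φ k ∈ A) →
      starFun Pn (starFun (dGreen Dp Pn) φ - starFun (dGreen Dm Pn) φ) = 0 := by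
    intro φ hφ
    rw [starFun_sub, i1p φ hφ, i1m φ hφ, sub_self]
  refine ⟨?_, ?_, ?_, ?_⟩
  · -- (i)
    intro φ hφ
    exact ⟨by rw [i2p φ hφ, i2m φ hφ, sub_self], cb φ hφ⟩
  · -- (ii)
    intro φ hφ ψ hψ h
    calc φ = starFun (dGreen Dp Pn) (starFun Pn φ) := (i2p φ hφ).symm
    _ = starFun (dGreen Dp Pn) (starFun Pn ψ) := by rw [h]
    _ = ψ := i2p ψ hψ
  · -- (iii)
    intro φ hφ
    constructor
    · intro h
      refine ⟨starFun (dGreen Dp Pn) φ, ?_, (i1p φ hφ).symm⟩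
      intro n
      have hGmGp : starFun (dGreen Dm Pn) φ = starFun (dGreen Dp Pn) φ :=
        (sub_eq_zero.mp h).symm
      set z : B := φ n - ∑ i ∈ range n, Pn (n - i) (starFun (dGreen Dp Pn) φ i) with hz
      have hzA : z ∈ A := by
        refine sub_mem (hφ n) (Submodule.sum_mem A fun i hi => ?_)
        exact hPpos (n - i) (by rw [mem_range] at hi; omega) _
      have e1 : starFun (dGreen Dp Pn) φ n = Dp z := coeffG Pn Dp φ n
      have e2 : starFun (dGreen Dp Pn) φ n = Dm z := by
        conv_lhs => rw [← hGmGp]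
        rw [coeffG Pn Dm φ n, hGmGp]
      have hzz : Dp z - Dm z = 0 := by rw [← e1, ← e2, sub_self]
      obtain ⟨b, hb, hzb⟩ := hex₁ z hzA hzz
      rw [e1, hzb, hDpP b hb]
      exact hb
    · rintro ⟨χ, hχ, rfl⟩
      rw [i2p χ hχ, i2m χ hχ, sub_self]
  · -- (iv)
    intro u
    constructor
    · intro hu
      have key := psi_spec A Pn Dp Dm hPpos hPDp hPDm hex₂ u hu
      refine ⟨psiAux A Pn Dp Dm u, fun n => (key n).1, ?_⟩
      funext n
      exact (key n).2
    · rintro ⟨ψ, hψ, rfl⟩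
      exact cb ψ hψ

end NCQFT
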